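/- Let 𝒢 be a sheaf of groups on a topological space X, let X = ⋃_α U_α be an open cover, and let g_{αβ} ∈ 𝒢(U_{αβ}) be a 1-cocycle, i.e. g_{αβ} g_{βγ} = g_{αγ} on U_{αβγ} for all α, β, γ. Then there exists a 𝒢-torsor 𝒮 on X together with sections s_α ∈ 𝒮(U_α) such that g_{αβ}·(s_β|U_{αβ}) = s_α|U_{αβ} for all α, β. -/

import Mathlib

/-!
STATEMENT 11: From a 1-cocycle g_{αβ} ∈ 𝒢(U_{αβ}) over an open cover X = ⋃ U_α
one can construct a 𝒢-torsor 𝒮 together with sections s_α ∈ 𝒮(U_α) realizing the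
cocycle: g_{αβ}·(s_β|U_{αβ}) = s_α|U_{αβ}.
-/

open TopologicalSpace

/-- A sheaf of sets on a topological space `X`: a presheaf (restriction maps,
functorial) which is separated and has gluing for compatible families. -/
structure SheafOfSets (X : Type) [TopologicalSpace X] : Type 1 where
  obj : Opens X → Type
  res : ∀ {U V : Opens X}, V ≤ U → obj U → obj V
  res_id : ∀ {U : Opens X} (a : obj U), res le_rfl a = a
  res_comp : ∀ {U V W : Opens X} (hWV : W ≤ V) (hVU : V ≤ U) (a : obj U),
    res hWV (res hVU a) = res (hWV.trans hVU) a
  sep : ∀ {U : Opens X} {ι : Type} (V : ι → Opens X) (hV : ∀ i, V i ≤ U),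
    (∀ x ∈ U, ∃ i, x ∈ V i) →
    ∀ a b : obj U, (∀ i, res (hV i) a = res (hV i) b) → a = b
  glue : ∀ {U : Opens X} {ι : Type} (V : ι → Opens X) (hV : ∀ i, V i ≤ U),
    (∀ x ∈ U, ∃ i, x ∈ V i) →
    ∀ s : ∀ i, obj (V i),
      (∀ i j, res (inf_le_left : V i ⊓ V j ≤ V i) (s i) =
        res (inf_le_right : V i ⊓ V j ≤ V j) (s j)) →
      ∃ a : obj U, ∀ i, res (hV i) a = s i

/-- A sheaf of groups on a topological space `X`: a presheaf of groups (with
group-homomorphic restriction maps) satisfying the sheaf condition. -/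
structure SheafOfGroups (X : Type) [TopologicalSpace X] : Type 1 where
  obj : Opens X → GrpCat.{0}
  res : ∀ {U V : Opens X}, V ≤ U → (obj U →* obj V)
  res_id : ∀ {U : Opens X} (a : obj U), res le_rfl a = a
  res_comp : ∀ {U V W : Opens X} (hWV : W ≤ V) (hVU : V ≤ U) (a : obj U),
    res hWV (res hVU a) = res (hWV.trans hVU) a
  sep : ∀ {U : Opens X} {ι : Type} (V : ι → Opens X) (hV : ∀ i, V i ≤ U),
    (∀ x ∈ U, ∃ i, x ∈ V i) →
    ∀ a b : obj U, (∀ i, res (hV i) a = res (hV i) b) → a = b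
  glue : ∀ {U : Opens X} {ι : Type} (V : ι → Opens X) (hV : ∀ i, V i ≤ U),
    (∀ x ∈ U, ∃ i, x ∈ V i) →
    ∀ s : ∀ i, obj (V i),
      (∀ i j, res (inf_le_left : V i ⊓ V j ≤ V i) (s i) =
        res (inf_le_right : V i ⊓ V j ≤ V j) (s j)) →
      ∃ a : obj U, ∀ i, res (hV i) a = s i

/-- A structure of `G`-torsor on a sheaf of sets `S`: an action of `G` on `S`
compatible with restriction, such that `S` has sections locally around every point
and the action of `G(U)` on `S(U)` is free and transitive for every open `U`. -/
structure TorsorStr {X : Type} [TopologicalSpace X]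
    (G : SheafOfGroups X) (S : SheafOfSets X) where
  act : ∀ U : Opens X, G.obj U → S.obj U → S.obj U
  one_act : ∀ (U : Opens X) (s : S.obj U), act U 1 s = s
  mul_act : ∀ (U : Opens X) (g h : G.obj U) (s : S.obj U),
    act U (g * h) s = act U g (act U h s)
  res_act : ∀ {U V : Opens X} (h : V ≤ U) (g : G.obj U) (s : S.obj U),
    S.res h (act U g s) = act V (G.res h g) (S.res h s)
  nonempty_cover : ∀ x : X, ∃ U : Opens X, x ∈ U ∧ Nonempty (S.obj U)
  free : ∀ (U : Opens X) (g : G.obj U) (s : S.obj U), act U g s = s → g = 1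
  trans : ∀ (U : Opens X) (s t : S.obj U), ∃ g : G.obj U, act U g s = t

section TorsorAux

variable {X : Type} [TopologicalSpace X] (G : SheafOfGroups X)

lemma SheafOfGroups.res_res {U V W : Opens X} (hWV : W ≤ V) (hVU : V ≤ U)
    (hWU : W ≤ U) (a : G.obj U) : G.res hWV (G.res hVU a) = G.res hWU a :=
  G.res_comp _ _ _

variable {A : Type} (U : A → Opens X) (g : ∀ α β, G.obj (U α ⊓ U β))

/-- Cocycle hypothesis, restricted to an arbitrary smaller open set. -/
lemma cocycle_res
    (hcoc : ∀ α β γ,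
      G.res (inf_le_left : U α ⊓ U β ⊓ U γ ≤ U α ⊓ U β) (g α β) *
        G.res (le_inf (inf_le_left.trans inf_le_right) inf_le_right :
          U α ⊓ U β ⊓ U γ ≤ U β ⊓ U γ) (g β γ) =
      G.res (le_inf (inf_le_left.trans inf_le_left) inf_le_right :
          U α ⊓ U β ⊓ U γ ≤ U α ⊓ U γ) (g α γ))
    (α β γ : A) {W : Opens X} (h1 : W ≤ U α ⊓ U β) (h2 : W ≤ U β ⊓ U γ)
    (h3 : W ≤ U α ⊓ U γ) :
    G.res h1 (g α β) * G.res h2 (g β γ) = G.res h3 (g α γ) := by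
  have hW : W ≤ U α ⊓ U β ⊓ U γ := le_inf h1 (h2.trans inf_le_right)
  have := congrArg (G.res hW) (hcoc α β γ)
  simpa only [map_mul, G.res_comp] using this

/-- The underlying type of the torsor: compatible families twisted by the cocycle. -/
def TObj (V : Opens X) : Type :=
  { t : ∀ α, G.obj (V ⊓ U α) //
    ∀ α β, G.res (inf_le_left : V ⊓ U α ⊓ U β ≤ V ⊓ U α) (t α) =
      G.res (le_inf (inf_le_left.trans inf_le_right) inf_le_right :
        V ⊓ U α ⊓ U β ≤ U α ⊓ U β) (g α β) *
      G.res (le_inf (inf_le_left.trans inf_le_left) inf_le_right :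
        V ⊓ U α ⊓ U β ≤ V ⊓ U β) (t β) }

lemma TObj.ext {V : Opens X} {s t : TObj G U g V} (h : ∀ α, s.1 α = t.1 α) :
    s = t := Subtype.ext (funext h)

/-- Restriction of compatible families. -/
def Tres {V' V : Opens X} (h : V' ≤ V) (t : TObj G U g V) : TObj G U g V' :=
  ⟨fun α => G.res (inf_le_inf h le_rfl) (t.1 α), by
    intro α β
    have := congrArg
      (G.res (show V' ⊓ U α ⊓ U β ≤ V ⊓ U α ⊓ U β from
        inf_le_inf (inf_le_inf h le_rfl) le_rfl)) (t.2 α β)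
    simpa only [map_mul, G.res_comp] using this⟩

end TorsorAux
section TorsorAux2

variable {X : Type} [TopologicalSpace X] (G : SheafOfGroups X)
  {A : Type} (U : A → Opens X) (g : ∀ α β, G.obj (U α ⊓ U β))

/-- The sheaf of sets underlying the torsor. -/
def Tsheaf : SheafOfSets X where
  obj := TObj G U g
  res h t := Tres G U g h t
  res_id t := TObj.ext G U g fun α => G.res_id _
  res_comp hWV hVU t := TObj.ext G U g fun α => G.res_comp _ _ _
  sep {W} {ι} V hV hcover a b hab := by
    apply TObj.ext G U g
    intro α
    refine G.sep (fun i => V i ⊓ U α) (fun i => inf_le_inf (hV i) le_rfl)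
      (fun x hx => ?_) _ _ (fun i => ?_)
    · obtain ⟨i, hi⟩ := hcover x hx.1
      exact ⟨i, hi, hx.2⟩
    · exact congrFun (congrArg Subtype.val (hab i)) α
  glue {W} {ι} V hV hcover s hs := by
    have key : ∀ α, ∃ a : G.obj (W ⊓ U α),
        ∀ i, G.res (inf_le_inf (hV i) le_rfl) a = (s i).1 α := by
      intro α
      refine G.glue (fun i => V i ⊓ U α) (fun i => inf_le_inf (hV i) le_rfl)
        (fun x hx => ?_) (fun i => (s i).1 α) (fun i j => ?_)
      · obtain ⟨i, hi⟩ := hcover x hx.1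
        exact ⟨i, hi, hx.2⟩
      · -- compatibility of the i-components
        have := congrFun (congrArg Subtype.val (hs i j)) α
        -- this : G.res _ ((s i).1 α) = G.res _ ((s j).1 α) on (V i ⊓ V j) ⊓ U α
        have h2 := congrArg (G.res (show (V i ⊓ U α) ⊓ (V j ⊓ U α) ≤ (V i ⊓ V j) ⊓ U α from
          le_inf (le_inf (inf_le_left.trans inf_le_left) (inf_le_right.trans inf_le_left))
            (inf_le_left.trans inf_le_right))) this
        simpa only [Tres, G.res_comp] using h2
    choose a ha using key
    refine ⟨⟨a, fun α β => ?_⟩, fun i => TObj.ext G U g fun α => ha α i⟩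
    refine G.sep (fun i => V i ⊓ (W ⊓ U α ⊓ U β))
      (fun i => inf_le_right) (fun x hx => ?_) _ _ (fun i => ?_)
    · obtain ⟨i, hi⟩ := hcover x hx.1.1
      exact ⟨i, hi, hx⟩
    · have h1 := congrArg (G.res (show V i ⊓ (W ⊓ U α ⊓ U β) ≤ V i ⊓ U α from
        le_inf inf_le_left (inf_le_right.trans (inf_le_left.trans inf_le_right)))) (ha α i)
      have h2 := congrArg (G.res (show V i ⊓ (W ⊓ U α ⊓ U β) ≤ V i ⊓ U β from
        le_inf inf_le_left (inf_le_right.trans inf_le_right))) (ha β i)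
      have h3 := congrArg (G.res (show V i ⊓ (W ⊓ U α ⊓ U β) ≤ V i ⊓ U α ⊓ U β from
        le_inf (le_inf inf_le_left (inf_le_right.trans (inf_le_left.trans inf_le_right)))
          (inf_le_right.trans inf_le_right))) ((s i).2 α β)
      simp only [map_mul, G.res_comp] at h1 h2 h3 ⊢
      rw [h1, h2]
      exact h3
  end TorsorAux2
section TorsorAuxSec

variable {X : Type} [TopologicalSpace X] (G : SheafOfGroups X)
  {A : Type} (U : A → Opens X) (g : ∀ α β, G.obj (U α ⊓ U β))

/-- The canonical sections realizing the cocycle. -/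
def Tsec
    (hcoc : ∀ α β γ,
      G.res (inf_le_left : U α ⊓ U β ⊓ U γ ≤ U α ⊓ U β) (g α β) *
        G.res (le_inf (inf_le_left.trans inf_le_right) inf_le_right :
          U α ⊓ U β ⊓ U γ ≤ U β ⊓ U γ) (g β γ) =
      G.res (le_inf (inf_le_left.trans inf_le_left) inf_le_right :
          U α ⊓ U β ⊓ U γ ≤ U α ⊓ U γ) (g α γ))
    (α : A) : TObj G U g (U α) :=
  ⟨fun γ => G.res (le_inf inf_le_right inf_le_left : U α ⊓ U γ ≤ U γ ⊓ U α) (g γ α), by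
    intro γ δ
    simp only [G.res_comp]
    exact (cocycle_res G U g hcoc γ δ α
      (le_inf (inf_le_left.trans inf_le_right) inf_le_right)
      (le_inf inf_le_right (inf_le_left.trans inf_le_left))
      (le_inf (inf_le_left.trans inf_le_right) (inf_le_left.trans inf_le_left))).symm⟩

end TorsorAuxSec
section TorsorAux3

variable {X : Type} [TopologicalSpace X] (G : SheafOfGroups X)
  {A : Type} (U : A → Opens X) (g : ∀ α β, G.obj (U α ⊓ U β))

/-- The torsor action: right multiplication by the inverse. -/
def Tact (V : Opens X) (h : G.obj V) (t : TObj G U g V) : TObj G U g V :=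
  ⟨fun α => t.1 α * (G.res inf_le_left h)⁻¹, by
    intro α β
    simp only [map_mul, map_inv, G.res_comp]
    rw [t.2 α β]
    exact mul_assoc _ _ _⟩

def Ttorsor (hcov : ∀ x : X, ∃ α, x ∈ U α)
    (hcoc : ∀ α β γ,
      G.res (inf_le_left : U α ⊓ U β ⊓ U γ ≤ U α ⊓ U β) (g α β) *
        G.res (le_inf (inf_le_left.trans inf_le_right) inf_le_right :
          U α ⊓ U β ⊓ U γ ≤ U β ⊓ U γ) (g β γ) =
      G.res (le_inf (inf_le_left.trans inf_le_left) inf_le_right :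
          U α ⊓ U β ⊓ U γ ≤ U α ⊓ U γ) (g α γ)) :
    TorsorStr G (Tsheaf G U g) where
  act := Tact G U g
  one_act V t := TObj.ext G U g fun α => by
    show t.1 α * (G.res _ 1)⁻¹ = t.1 α
    simp
  mul_act V h k t := TObj.ext G U g fun α => by
    show t.1 α * (G.res _ (h * k))⁻¹ = (t.1 α * (G.res _ k)⁻¹) * (G.res _ h)⁻¹
    rw [map_mul, mul_inv_rev, mul_assoc]
  res_act {V V'} h k t := TObj.ext G U g fun α => by
    show G.res _ (t.1 α * (G.res _ k)⁻¹) = G.res _ (t.1 α) * (G.res _ (G.res h k))⁻¹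
    simp only [map_mul, map_inv, G.res_comp]
  nonempty_cover x := by
    obtain ⟨α, hα⟩ := hcov x
    exact ⟨U α, hα, ⟨Tsec G U g hcoc α⟩⟩
  free V h t hyp := by
    have hc : ∀ γ, t.1 γ * (G.res (inf_le_left : V ⊓ U γ ≤ V) h)⁻¹ = t.1 γ :=
      fun γ => congrFun (congrArg Subtype.val hyp) γ
    refine G.sep (fun γ => V ⊓ U γ) (fun γ => inf_le_left) (fun x hx => ?_) h 1
      (fun γ => ?_)
    · obtain ⟨γ, hγ⟩ := hcov x
      exact ⟨γ, hx, hγ⟩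
    · rw [map_one]
      have := mul_eq_left.mp (hc γ)
      exact inv_eq_one.mp this
  trans V s t := by
    have key : ∃ h : G.obj V, ∀ γ,
        G.res (inf_le_left : V ⊓ U γ ≤ V) h = (t.1 γ)⁻¹ * s.1 γ := by
      refine G.glue (fun γ => V ⊓ U γ) (fun γ => inf_le_left) (fun x hx => ?_)
        (fun γ => (t.1 γ)⁻¹ * s.1 γ) (fun γ δ => ?_)
      · obtain ⟨γ, hγ⟩ := hcov x
        exact ⟨γ, hx, hγ⟩
      · have w : (V ⊓ U γ) ⊓ (V ⊓ U δ) ≤ V ⊓ U γ ⊓ U δ :=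
          le_inf inf_le_left (inf_le_right.trans inf_le_right)
        have hsr := congrArg (G.res w) (s.2 γ δ)
        have htr := congrArg (G.res w) (t.2 γ δ)
        simp only [map_mul, G.res_comp] at hsr htr
        simp only [map_mul, map_inv]
        rw [hsr, htr]
        group
    obtain ⟨h, hh⟩ := key
    refine ⟨h, TObj.ext G U g fun γ => ?_⟩
    show s.1 γ * (G.res _ h)⁻¹ = t.1 γ
    rw [hh γ]
    group
  end TorsorAux3
theorem torsor_from_cocycle {X : Type} [TopologicalSpace X]
    (G : SheafOfGroups X)
    {A : Type} (U : A → Opens X) (hcov : ∀ x : X, ∃ α, x ∈ U α)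
    (g : ∀ α β, G.obj (U α ⊓ U β))
    (hcoc : ∀ α β γ,
      G.res (inf_le_left : U α ⊓ U β ⊓ U γ ≤ U α ⊓ U β) (g α β) *
        G.res (le_inf (inf_le_left.trans inf_le_right) inf_le_right :
          U α ⊓ U β ⊓ U γ ≤ U β ⊓ U γ) (g β γ) =
      G.res (le_inf (inf_le_left.trans inf_le_left) inf_le_right :
          U α ⊓ U β ⊓ U γ ≤ U α ⊓ U γ) (g α γ)) :
    ∃ (S : SheafOfSets X) (μ : TorsorStr G S) (s : ∀ α, S.obj (U α)),
      ∀ α β, μ.act (U α ⊓ U β) (g α β) (S.res inf_le_right (s β)) =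
        S.res inf_le_left (s α) := by
  refine ⟨Tsheaf G U g, Ttorsor G U g hcov hcoc, Tsec G U g hcoc, fun α β => ?_⟩
  refine TObj.ext G U g fun γ => ?_
  show G.res _ (G.res _ (g γ β)) * (G.res _ (g α β))⁻¹ = G.res _ (G.res _ (g γ α))
  simp only [G.res_comp]
  have hc := cocycle_res G U g hcoc γ α β
    (le_inf inf_le_right (inf_le_left.trans inf_le_left))
    (inf_le_left : U α ⊓ U β ⊓ U γ ≤ U α ⊓ U β)
    (le_inf inf_le_right (inf_le_left.trans inf_le_right))
  rw [← hc]
  exact mul_inv_cancel_right _ _
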